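/- arXiv:2207.07719 — 10 statements merged into one kernel-verified Lean document; each statement's English description precedes it below -/
import Mathlib

section
/- Let Φ_X, Φ_Y ∈ ℝ^{N×N_d} have full column rank and let R ∈ ℝ^{N_d×N_d} be invertible. With K_F = Φ_X† Φ_Y, K_B = Φ_Y† Φ_X and, for the transformed matrices Φ̃_X = Φ_X R, Φ̃_Y = Φ_Y R, K̃_F = Φ̃_X† Φ̃_Y, K̃_B = Φ̃_Y† Φ̃_X, one has K̃_F K̃_B = R⁻¹ (K_F K_B) R. -/
open Matrix

/-- Moore–Penrose pseudoinverse of a full-column-rank matrix: `A† = (AᵀA)⁻¹Aᵀ`. -/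
noncomputable def pinv {N Nd : ℕ} (A : Matrix (Fin N) (Fin Nd) ℝ) :
    Matrix (Fin Nd) (Fin N) ℝ := (Aᵀ * A)⁻¹ * Aᵀ

lemma pinv_mul_right' {N Nd : ℕ} (A : Matrix (Fin N) (Fin Nd) ℝ)
    (R : Matrix (Fin Nd) (Fin Nd) ℝ) (hA : IsUnit (Aᵀ * A)) (hR : IsUnit R) :
    pinv (A * R) = R⁻¹ * pinv A := by
  have hRd : IsUnit R.det := (Matrix.isUnit_iff_isUnit_det R).mp hR
  have hRTd : IsUnit Rᵀ.det := by rwa [Matrix.det_transpose]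
  unfold pinv
  have h1 : (A * R)ᵀ * (A * R) = Rᵀ * (Aᵀ * A) * R := by
    simp [transpose_mul, Matrix.mul_assoc]
  rw [h1, transpose_mul]
  rw [Matrix.mul_inv_rev, Matrix.mul_inv_rev]
  have : Rᵀ⁻¹ * (Rᵀ * Aᵀ) = Aᵀ := by
    rw [← Matrix.mul_assoc, Matrix.nonsing_inv_mul _ hRTd, Matrix.one_mul]
  simp only [Matrix.mul_assoc, this]

/-- Forward-backward EDMD product transforms by similarity under a change of basis. -/
theorem fwd_bwd_similar {N Nd : ℕ} (ΦX ΦY : Matrix (Fin N) (Fin Nd) ℝ)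
    (R : Matrix (Fin Nd) (Fin Nd) ℝ)
    (hX : IsUnit (ΦXᵀ * ΦX)) (hY : IsUnit (ΦYᵀ * ΦY)) (hR : IsUnit R) :
    pinv (ΦX * R) * (ΦY * R) * (pinv (ΦY * R) * (ΦX * R)) =
      R⁻¹ * (pinv ΦX * ΦY * (pinv ΦY * ΦX)) * R := by
  rw [pinv_mul_right' _ _ hX hR, pinv_mul_right' _ _ hY hR]
  have hRd : IsUnit R.det := (Matrix.isUnit_iff_isUnit_det R).mp hR
  have : R * R⁻¹ = 1 := Matrix.mul_nonsing_inv R hRd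
  calc R⁻¹ * pinv ΦX * (ΦY * R) * (R⁻¹ * pinv ΦY * (ΦX * R))
      = R⁻¹ * pinv ΦX * ΦY * (R * R⁻¹) * (pinv ΦY * (ΦX * R)) := by
        simp [Matrix.mul_assoc]
    _ = R⁻¹ * (pinv ΦX * ΦY * (pinv ΦY * ΦX)) * R := by
        rw [this]; simp [Matrix.mul_assoc]
end

section
/- Let Φ_X, Φ_Y ∈ ℝ^{N×N_d} have full column rank and let R ∈ ℝ^{N_d×N_d} be invertible. Let M_C = I − Φ_X†Φ_Y Φ_Y†Φ_X be the consistency matrix built from Φ_X, Φ_Y, and let M̃_C = I − Φ̃_X†Φ̃_Y Φ̃_Y†Φ̃_X be the consistency matrix built from Φ̃_X = Φ_X R and Φ̃_Y = Φ_Y R. Then M̃_C = R⁻¹ M_C R. -/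
open Matrix

lemma pinv_mul {N Nd : ℕ} (A : Matrix (Fin N) (Fin Nd) ℝ)
    (R : Matrix (Fin Nd) (Fin Nd) ℝ) (hR : IsUnit R) :
    pinv (A * R) = R⁻¹ * pinv A := by
  have hR' : IsUnit R.det := (Matrix.isUnit_iff_isUnit_det R).mp hR
  have hRt : IsUnit Rᵀ.det := by rwa [Matrix.det_transpose]
  unfold pinv
  have h1 : (A * R)ᵀ * (A * R) = Rᵀ * (Aᵀ * A) * R := by
    rw [Matrix.transpose_mul]
    simp only [Matrix.mul_assoc]
  rw [h1, Matrix.transpose_mul, Matrix.mul_inv_rev, Matrix.mul_inv_rev]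
  rw [Matrix.mul_assoc (R⁻¹), Matrix.mul_assoc ((Aᵀ * A)⁻¹),
    ← Matrix.mul_assoc (Rᵀ⁻¹), Matrix.nonsing_inv_mul _ hRt, Matrix.one_mul,
    ← Matrix.mul_assoc]

/-- The consistency matrix transforms by similarity under a change of basis. -/
theorem consistency_matrix_similar {N Nd : ℕ} (ΦX ΦY : Matrix (Fin N) (Fin Nd) ℝ)
    (R : Matrix (Fin Nd) (Fin Nd) ℝ)
    (hX : IsUnit (ΦXᵀ * ΦX)) (hY : IsUnit (ΦYᵀ * ΦY)) (hR : IsUnit R) :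
    (1 : Matrix (Fin Nd) (Fin Nd) ℝ) - pinv (ΦX * R) * (ΦY * R) * (pinv (ΦY * R) * (ΦX * R)) =
      R⁻¹ * ((1 : Matrix (Fin Nd) (Fin Nd) ℝ) - pinv ΦX * ΦY * (pinv ΦY * ΦX)) * R := by
  have hR' : IsUnit R.det := (Matrix.isUnit_iff_isUnit_det R).mp hR
  have hRR : R * R⁻¹ = 1 := Matrix.mul_nonsing_inv _ hR'
  have hinvR : R⁻¹ * R = 1 := Matrix.nonsing_inv_mul _ hR'
  rw [pinv_mul _ _ hR, pinv_mul _ _ hR]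
  rw [Matrix.mul_sub, Matrix.sub_mul, Matrix.mul_one, hinvR]
  congr 1
  calc R⁻¹ * pinv ΦX * (ΦY * R) * (R⁻¹ * pinv ΦY * (ΦX * R))
      = R⁻¹ * pinv ΦX * ΦY * (R * R⁻¹) * (pinv ΦY * ΦX * R) := by
        simp only [Matrix.mul_assoc]
    _ = R⁻¹ * (pinv ΦX * ΦY * (pinv ΦY * ΦX)) * R := by
        rw [hRR, Matrix.mul_one]; simp only [Matrix.mul_assoc]
end

section
/- Let Φ_X, Φ_Y ∈ ℝ^{N×N_d} have full column rank. Then there exists an invertible matrix R ∈ ℝ^{N_d×N_d} such that R⁻¹ M_C R is a symmetric matrix, where M_C = I − Φ_X†Φ_Y Φ_Y†Φ_X is the consistency matrix. -/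
open Matrix

/-- The consistency matrix is similar to a symmetric matrix. -/
theorem consistency_matrix_similar_symmetric {N Nd : ℕ}
    (ΦX ΦY : Matrix (Fin N) (Fin Nd) ℝ)
    (hX : IsUnit (ΦXᵀ * ΦX)) (hY : IsUnit (ΦYᵀ * ΦY)) :
    ∃ R : Matrix (Fin Nd) (Fin Nd) ℝ, IsUnit R ∧
      (R⁻¹ * ((1 : Matrix (Fin Nd) (Fin Nd) ℝ) - pinv ΦX * ΦY * (pinv ΦY * ΦX)) * R)ᵀ =
        R⁻¹ * ((1 : Matrix (Fin Nd) (Fin Nd) ℝ) - pinv ΦX * ΦY * (pinv ΦY * ΦX)) * R := by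
  set G : Matrix (Fin Nd) (Fin Nd) ℝ := ΦXᵀ * ΦX with hGdef
  have hGps : G.PosSemidef := by
    have := posSemidef_conjTranspose_mul_self ΦX
    rwa [conjTranspose_eq_transpose_of_trivial] at this
  set Q : Matrix (Fin Nd) (Fin Nd) ℝ := (open scoped MatrixOrder in CFC.sqrt G) with hQdef
  have hQQ : Q * Q = G := (open scoped MatrixOrder in CFC.sqrt_mul_sqrt_self G hGps.nonneg)
  -- Q is invertible
  have hGdet : IsUnit G.det := (isUnit_iff_isUnit_det G).mp hX
  have hQdet : IsUnit Q.det := by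
    have h : Q.det * Q.det = G.det := by rw [← det_mul, hQQ]
    exact isUnit_of_mul_isUnit_left (h ▸ hGdet)
  have hQiQ : Q⁻¹ * Q = 1 := nonsing_inv_mul Q hQdet
  have hQunitInv : IsUnit Q⁻¹ := (isUnit_iff_isUnit_det _).mpr (Q.isUnit_nonsing_inv_det hQdet)
  -- symmetry facts
  have hQsymm : Qᵀ = Q := by
    have h : Q.IsHermitian := (open scoped MatrixOrder in (CFC.sqrt_nonneg G).posSemidef.isHermitian)
    rwa [IsHermitian, conjTranspose_eq_transpose_of_trivial] at h
  have hQisymm : (Q⁻¹)ᵀ = Q⁻¹ := by rw [transpose_nonsing_inv, hQsymm]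
  -- the symmetric core
  set S : Matrix (Fin Nd) (Fin Nd) ℝ := G - ΦXᵀ * ΦY * ((ΦYᵀ * ΦY)⁻¹ * (ΦYᵀ * ΦX)) with hSdef
  have hSsymm : Sᵀ = S := by
    have hGYinv : ((ΦYᵀ * ΦY)⁻¹)ᵀ = (ΦYᵀ * ΦY)⁻¹ := by
      rw [transpose_nonsing_inv, transpose_mul, transpose_transpose]
    have hGsymm : Gᵀ = G := by rw [hGdef, transpose_mul, transpose_transpose]
    rw [hSdef, transpose_sub, hGsymm]
    congr 1
    rw [transpose_mul, transpose_mul, hGYinv, transpose_mul, transpose_mul,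
      transpose_transpose, transpose_transpose]
    noncomm_ring
  -- key computation: Q * M * Q⁻¹ = Q⁻¹ * S * Q⁻¹
  have hGinv : G⁻¹ = Q⁻¹ * Q⁻¹ := by rw [← hQQ, Matrix.mul_inv_rev]
  have hQGinv : Q * G⁻¹ = Q⁻¹ := by
    rw [hGinv, ← mul_assoc, mul_nonsing_inv Q hQdet, one_mul]
  have hQeq : Q = Q⁻¹ * G := by rw [← hQQ, ← mul_assoc, hQiQ, one_mul]
  have key : Q * ((1 : Matrix (Fin Nd) (Fin Nd) ℝ) - pinv ΦX * ΦY * (pinv ΦY * ΦX)) * Q⁻¹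
      = Q⁻¹ * S * Q⁻¹ := by
    have : Q * ((1 : Matrix (Fin Nd) (Fin Nd) ℝ) - pinv ΦX * ΦY * (pinv ΦY * ΦX)) = Q⁻¹ * S := by
      rw [pinv, pinv, hSdef, mul_sub, mul_one, mul_sub]
      rw [show Q * ((ΦXᵀ * ΦX)⁻¹ * ΦXᵀ * ΦY * ((ΦYᵀ * ΦY)⁻¹ * ΦYᵀ * ΦX))
          = Q * (ΦXᵀ * ΦX)⁻¹ * (ΦXᵀ * ΦY * ((ΦYᵀ * ΦY)⁻¹ * (ΦYᵀ * ΦX))) by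
        simp only [Matrix.mul_assoc]]
      rw [show (ΦXᵀ * ΦX)⁻¹ = G⁻¹ from rfl, hQGinv]
      congr 1
    rw [this]
  refine ⟨Q⁻¹, hQunitInv, ?_⟩
  rw [nonsing_inv_nonsing_inv Q hQdet, key, transpose_mul, transpose_mul, hQisymm, hSsymm,
    mul_assoc]
end

section
/- Let Φ_X, Φ_Y ∈ ℝ^{N×N_d} have full column rank. Then the consistency matrix M_C = I − Φ_X†Φ_Y Φ_Y†Φ_X is diagonalizable over ℝ: there exist an invertible matrix P ∈ ℝ^{N_d×N_d} and a diagonal matrix Λ ∈ ℝ^{N_d×N_d} with M_C = P Λ P⁻¹. -/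
open Matrix

/-- The consistency matrix is diagonalizable over ℝ. -/
theorem consistency_matrix_diagonalizable {N Nd : ℕ}
    (ΦX ΦY : Matrix (Fin N) (Fin Nd) ℝ)
    (hX : IsUnit (ΦXᵀ * ΦX)) (hY : IsUnit (ΦYᵀ * ΦY)) :
    ∃ (P Λ : Matrix (Fin Nd) (Fin Nd) ℝ), IsUnit P ∧ Λ.IsDiag ∧
      (1 : Matrix (Fin Nd) (Fin Nd) ℝ) - pinv ΦX * ΦY * (pinv ΦY * ΦX) = P * Λ * P⁻¹ := by
  classical
  set A : Matrix (Fin Nd) (Fin Nd) ℝ := ΦXᵀ * ΦX with hAdef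
  have hApsd : A.PosSemidef := by
    simpa [hAdef, conjTranspose_eq_transpose_of_trivial] using
      posSemidef_conjTranspose_mul_self ΦX
  set S : Matrix (Fin Nd) (Fin Nd) ℝ := (open scoped MatrixOrder in CFC.sqrt A) with hSdef
  have hSS : S * S = A := by open scoped MatrixOrder in exact CFC.sqrt_mul_sqrt_self A hApsd.nonneg
  have hSherm : Sᵀ = S := by
    have := (open scoped MatrixOrder in (CFC.sqrt_nonneg A).posSemidef).1
    simpa [conjTranspose_eq_transpose_of_trivial, Matrix.IsSymm] using this
  -- S is invertible
  have hSunit : IsUnit S := by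
    rw [Matrix.isUnit_iff_isUnit_det]
    have hAdet : IsUnit A.det := (Matrix.isUnit_iff_isUnit_det A).mp hX
    rw [← hSS, Matrix.det_mul] at hAdet
    exact isUnit_of_mul_isUnit_left hAdet
  have hSdet : IsUnit S.det := (Matrix.isUnit_iff_isUnit_det S).mp hSunit
  have hSinv : S * S⁻¹ = 1 := Matrix.mul_nonsing_inv S hSdet
  have hSinv' : S⁻¹ * S = 1 := Matrix.nonsing_inv_mul S hSdet
  -- the symmetric middle matrix C
  set B : Matrix (Fin Nd) (Fin Nd) ℝ := ΦYᵀ * ΦY with hBdef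
  set C : Matrix (Fin Nd) (Fin Nd) ℝ := ΦXᵀ * ΦY * (B⁻¹ * (ΦYᵀ * ΦX)) with hCdef
  have hBsymm : Bᵀ = B := by simp [hBdef, Matrix.transpose_mul]
  have hBinvsymm : (B⁻¹)ᵀ = B⁻¹ := by
    rw [Matrix.transpose_nonsing_inv, hBsymm]
  have hCsymm : Cᵀ = C := by
    simp only [hCdef, Matrix.transpose_mul, hBinvsymm, Matrix.transpose_transpose]
    simp only [Matrix.mul_assoc]
  have hSinvsymm : (S⁻¹)ᵀ = S⁻¹ := by
    rw [Matrix.transpose_nonsing_inv, hSherm]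
  -- D is symmetric
  set D : Matrix (Fin Nd) (Fin Nd) ℝ := 1 - S⁻¹ * C * S⁻¹ with hDdef
  have hDherm : D.IsHermitian := by
    show Dᴴ = D
    rw [conjTranspose_eq_transpose_of_trivial]
    simp only [hDdef, Matrix.transpose_sub, Matrix.transpose_one, Matrix.transpose_mul,
      hSinvsymm, hCsymm]
    noncomm_ring
  -- spectral theorem
  set V : Matrix (Fin Nd) (Fin Nd) ℝ := (hDherm.eigenvectorUnitary : Matrix (Fin Nd) (Fin Nd) ℝ)
    with hVdef
  set Λ0 : Matrix (Fin Nd) (Fin Nd) ℝ := diagonal (RCLike.ofReal ∘ hDherm.eigenvalues) with hΛdef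
  have hVmem := hDherm.eigenvectorUnitary.2
  have hVstar : V * star V = 1 := (Matrix.mem_unitaryGroup_iff).mp hVmem
  have hVstar' : star V * V = 1 := mul_eq_one_comm.mp hVstar
  have hVinv : V⁻¹ = star V := Matrix.inv_eq_right_inv hVstar
  have hspec : D = V * Λ0 * star V := hDherm.spectral_theorem
  refine ⟨S⁻¹ * V, Λ0, ?_, hΛdef ▸ isDiag_diagonal _, ?_⟩
  · have hSinvUnit : IsUnit (S⁻¹) := ⟨⟨S⁻¹, S, hSinv', hSinv⟩, rfl⟩
    have hVunit : IsUnit V := ⟨⟨V, star V, hVstar, hVstar'⟩, rfl⟩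
    exact hSinvUnit.mul hVunit
  · have hPinv : (S⁻¹ * V)⁻¹ = V⁻¹ * S := by
      rw [Matrix.mul_inv_rev, Matrix.nonsing_inv_nonsing_inv S hSdet]
    rw [hPinv, hVinv]
    calc (1 : Matrix (Fin Nd) (Fin Nd) ℝ) - pinv ΦX * ΦY * (pinv ΦY * ΦX)
        = 1 - A⁻¹ * C := by
          simp only [pinv, hAdef, hBdef, hCdef, Matrix.mul_assoc]
      _ = S⁻¹ * D * S := by
          have hAinv : A⁻¹ = S⁻¹ * S⁻¹ := by rw [← hSS, Matrix.mul_inv_rev]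
          have h1 : S⁻¹ * (S⁻¹ * C * S⁻¹) * S = S⁻¹ * S⁻¹ * C * (S⁻¹ * S) := by
            noncomm_ring
          rw [hDdef, Matrix.mul_sub, Matrix.sub_mul, Matrix.mul_one, hSinv', h1, hSinv',
            Matrix.mul_one, hAinv]
      _ = S⁻¹ * (V * Λ0 * star V) * S := by rw [← hspec]
      _ = S⁻¹ * V * Λ0 * (star V * S) := by noncomm_ring
end

section
/- Let Φ_X, Φ_Y ∈ ℝ^{N×N_d} have full column rank. Then every complex eigenvalue λ of the consistency matrix M_C = I − Φ_X†Φ_Y Φ_Y†Φ_X is real and satisfies 0 ≤ λ ≤ 1. -/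
open Matrix ComplexOrder

private lemma cmap_mul {m n o : ℕ} (A : Matrix (Fin m) (Fin n) ℝ)
    (B : Matrix (Fin n) (Fin o) ℝ) :
    (A * B).map Complex.ofReal = A.map Complex.ofReal * B.map Complex.ofReal := by
  ext i j
  simp [Matrix.mul_apply, Matrix.map_apply]

private lemma cmap_herm {m n : ℕ} (A : Matrix (Fin m) (Fin n) ℝ) :
    (A.map Complex.ofReal)ᴴ = Aᵀ.map Complex.ofReal := by
  ext i j
  simp [Matrix.conjTranspose_apply, Matrix.map_apply, Complex.conj_ofReal]

/-- For a Hermitian idempotent complex matrix, the quadratic form is nonneg. -/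
private lemma herm_idem_nonneg {n : ℕ} (C : Matrix (Fin n) (Fin n) ℂ)
    (hH : Cᴴ = C) (hI : C * C = C) (w : Fin n → ℂ) :
    0 ≤ star w ⬝ᵥ C *ᵥ w := by
  have key : star w ⬝ᵥ C *ᵥ w = star (C *ᵥ w) ⬝ᵥ (C *ᵥ w) := by
    conv_lhs => rw [← hI, ← Matrix.mulVec_mulVec]
    rw [Matrix.dotProduct_mulVec,
      show star w ᵥ* C = star (C *ᵥ w) by rw [Matrix.star_mulVec, hH]]
  rw [key]
  exact dotProduct_star_self_nonneg _

/-- Every complex eigenvalue of the consistency matrix is real and lies in [0,1]. -/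
theorem consistency_matrix_spectrum_in_unit_interval {N Nd : ℕ}
    (ΦX ΦY : Matrix (Fin N) (Fin Nd) ℝ)
    (hX : IsUnit (ΦXᵀ * ΦX)) (hY : IsUnit (ΦYᵀ * ΦY)) :
    ∀ μ ∈ spectrum ℂ
        (((1 : Matrix (Fin Nd) (Fin Nd) ℝ) -
          pinv ΦX * ΦY * (pinv ΦY * ΦX)).map Complex.ofReal),
      μ.im = 0 ∧ 0 ≤ μ.re ∧ μ.re ≤ 1 := by
  intro μ hμ
  have hGdet : IsUnit (ΦXᵀ * ΦX).det := (Matrix.isUnit_iff_isUnit_det _).mp hX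
  have hHdet : IsUnit (ΦYᵀ * ΦY).det := (Matrix.isUnit_iff_isUnit_det _).mp hY
  -- real matrices
  set A : Matrix (Fin Nd) (Fin Nd) ℝ := pinv ΦX * ΦY * (pinv ΦY * ΦX) with hA
  set P : Matrix (Fin N) (Fin N) ℝ := ΦY * ((ΦYᵀ * ΦY)⁻¹ * ΦYᵀ) with hPdef
  -- real identities
  have hGA : (ΦXᵀ * ΦX) * A = ΦXᵀ * P * ΦX := by
    simp only [hA, hPdef, pinv, ← Matrix.mul_assoc]
    rw [Matrix.mul_nonsing_inv _ hGdet, Matrix.one_mul]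
  have hPP : P * P = P := by
    simp only [hPdef, Matrix.mul_assoc]
    rw [← Matrix.mul_assoc ΦYᵀ ΦY, ← Matrix.mul_assoc _ (ΦYᵀ * ΦY),
      Matrix.nonsing_inv_mul _ hHdet, Matrix.one_mul]
  have hPT : Pᵀ = P := by
    simp only [hPdef, Matrix.transpose_mul, Matrix.transpose_nonsing_inv,
      Matrix.transpose_transpose, Matrix.mul_assoc]
  -- complexifications
  set Xc : Matrix (Fin N) (Fin Nd) ℂ := ΦX.map Complex.ofReal with hXc
  set Pc : Matrix (Fin N) (Fin N) ℂ := P.map Complex.ofReal with hPc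
  set Gc : Matrix (Fin Nd) (Fin Nd) ℂ := (ΦXᵀ * ΦX).map Complex.ofReal with hGc
  have hGcX : Gc = Xcᵀ * Xc := by
    rw [hGc, cmap_mul, hXc, Matrix.transpose_map]
  have hPcH : Pcᴴ = Pc := by rw [hPc, cmap_herm, hPT]
  have hPc2 : Pc * Pc = Pc := by rw [hPc, ← cmap_mul, hPP]
  have hXcH : Xcᴴ = Xcᵀ := by rw [hXc, cmap_herm, Matrix.transpose_map]
  have hGcUnit : IsUnit Gc := by
    have h2 := hX.map (RingHom.mapMatrix (Complex.ofRealHom) :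
      Matrix (Fin Nd) (Fin Nd) ℝ →+* Matrix (Fin Nd) (Fin Nd) ℂ)
    rw [RingHom.mapMatrix_apply] at h2
    exact h2
  -- eigenvector
  rw [← AlgEquiv.spectrum_eq
    (Matrix.toLinAlgEquiv' : Matrix (Fin Nd) (Fin Nd) ℂ ≃ₐ[ℂ] _)] at hμ
  obtain ⟨v, hv⟩ :=
    (Module.End.hasEigenvalue_iff_mem_spectrum.mpr hμ).exists_hasEigenvector
  have hv0 : v ≠ 0 := hv.right
  have hMv : ((1 - A).map Complex.ofReal) *ᵥ v = μ • v := by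
    simpa [Matrix.toLinAlgEquiv'_apply] using hv.apply_eq_smul
  have hmapsub : ((1 - A).map Complex.ofReal)
      = 1 - A.map Complex.ofReal := by
    ext i j
    by_cases h : i = j <;>
      simp [Matrix.map_apply, Matrix.sub_apply, Matrix.one_apply, h]
  have hAv : (A.map Complex.ofReal) *ᵥ v = (1 - μ) • v := by
    rw [hmapsub, Matrix.sub_mulVec, Matrix.one_mulVec] at hMv
    have : (A.map Complex.ofReal) *ᵥ v = v - μ • v := by
      rw [← hMv]; abel
    rw [this, sub_smul, one_smul]
  -- multiply by Gc
  set w : Fin N → ℂ := Xc *ᵥ v with hw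
  have hGAc : Gc * (A.map Complex.ofReal) = Xcᵀ * Pc * Xc := by
    rw [hGc, ← cmap_mul, hGA, cmap_mul, cmap_mul, Matrix.transpose_map, ← hXc, ← hPc]
  have hkey0 : (Xcᵀ * Pc * Xc) *ᵥ v = (1 - μ) • (Gc *ᵥ v) := by
    rw [← hGAc, ← Matrix.mulVec_mulVec, hAv, Matrix.mulVec_smul]
  -- dot with star v
  have hstarw : star v ᵥ* Xcᵀ = star w := by
    rw [hw, Matrix.star_mulVec, hXcH]
  have hL : star v ⬝ᵥ (Xcᵀ * Pc * Xc) *ᵥ v = star w ⬝ᵥ Pc *ᵥ w := by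
    rw [Matrix.mul_assoc, ← Matrix.mulVec_mulVec, Matrix.dotProduct_mulVec, hstarw,
      ← Matrix.mulVec_mulVec, ← hw]
  have hR : star v ⬝ᵥ Gc *ᵥ v = star w ⬝ᵥ w := by
    rw [hGcX, ← Matrix.mulVec_mulVec, Matrix.dotProduct_mulVec, hstarw, ← hw]
  have hkey : star w ⬝ᵥ Pc *ᵥ w = (1 - μ) * (star w ⬝ᵥ w) := by
    have := congrArg (fun u => star v ⬝ᵥ u) hkey0
    simpa [hL, hR, dotProduct_smul, smul_eq_mul] using this
  -- positivity facts
  have hwne : w ≠ 0 := by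
    intro h0
    apply hv0
    have hinj := Matrix.mulVec_injective_iff_isUnit.mpr hGcUnit
    apply hinj
    rw [hGcX, ← Matrix.mulVec_mulVec, ← hw, h0, Matrix.mulVec_zero, Matrix.mulVec_zero]
  have ha : 0 < star w ⬝ᵥ w := Matrix.dotProduct_star_self_pos_iff.mpr hwne
  have hb : 0 ≤ star w ⬝ᵥ Pc *ᵥ w := herm_idem_nonneg Pc hPcH hPc2 w
  have hq : 0 ≤ star w ⬝ᵥ (1 - Pc) *ᵥ w := by
    refine herm_idem_nonneg _ ?_ ?_ w
    · simp [Matrix.conjTranspose_sub, hPcH]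
    · rw [sub_mul, mul_sub, mul_sub, Matrix.one_mul, Matrix.mul_one, hPc2]
      simp [hPc]
  have hba : star w ⬝ᵥ Pc *ᵥ w ≤ star w ⬝ᵥ w := by
    rw [Matrix.sub_mulVec, Matrix.one_mulVec, dotProduct_sub, sub_nonneg] at hq
    exact hq
  -- extract real/imaginary parts
  set a : ℂ := star w ⬝ᵥ w with haa
  set b : ℂ := star w ⬝ᵥ Pc *ᵥ w with hbb
  have haim : a.im = 0 := ((Complex.lt_def).mp ha).2.symm
  have hare : 0 < a.re := ((Complex.lt_def).mp ha).1
  have hbim : b.im = 0 := ((Complex.le_def).mp hb).2.symm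
  have hbre : 0 ≤ b.re := ((Complex.le_def).mp hb).1
  have hbare : b.re ≤ a.re := ((Complex.le_def).mp hba).1
  have hre : b.re = (1 - μ.re) * a.re := by
    have := congrArg Complex.re hkey
    simpa [Complex.mul_re, Complex.sub_re, Complex.sub_im, haim] using this
  have him : μ.im = 0 := by
    have := congrArg Complex.im hkey
    simp [Complex.mul_im, Complex.sub_re, Complex.sub_im, haim, hbim] at this
    rcases this with h | h
    · exact h
    · exact absurd h (ne_of_gt hare)
  exact ⟨him, by nlinarith, by nlinarith⟩
end

section
/- Let Φ_X, Φ_Y ∈ ℝ^{N×N_d} have full column rank, and suppose K_F K_B = I_{N_d}, where K_F = Φ_X†Φ_Y and K_B = Φ_Y†Φ_X. Then the column spaces of Φ_X and Φ_Y coincide, range(Φ_X) = range(Φ_Y), and consequently the orthogonal projections coincide: Φ_Y Φ_Y† = Φ_X Φ_X†. -/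
open Matrix

/-- If the forward-backward EDMD product is the identity, the column spaces coincide
and so do the orthogonal projections. -/
theorem range_eq_of_fwd_bwd_eq_one {N Nd : ℕ}
    (ΦX ΦY : Matrix (Fin N) (Fin Nd) ℝ)
    (hX : IsUnit (ΦXᵀ * ΦX)) (hY : IsUnit (ΦYᵀ * ΦY))
    (h : pinv ΦX * ΦY * (pinv ΦY * ΦX) = 1) :
    LinearMap.range ΦX.mulVecLin = LinearMap.range ΦY.mulVecLin ∧
      ΦY * pinv ΦY = ΦX * pinv ΦX := by
  have hXd : IsUnit (ΦXᵀ * ΦX).det := (Matrix.isUnit_iff_isUnit_det _).mp hX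
  have hYd : IsUnit (ΦYᵀ * ΦY).det := (Matrix.isUnit_iff_isUnit_det _).mp hY
  have hXinv : (ΦXᵀ * ΦX)⁻¹ * (ΦXᵀ * ΦX) = 1 := Matrix.nonsing_inv_mul _ hXd
  have hYinv : (ΦYᵀ * ΦY)⁻¹ * (ΦYᵀ * ΦY) = 1 := Matrix.nonsing_inv_mul _ hYd
  set PX := ΦX * pinv ΦX with hPX
  set PY := ΦY * pinv ΦY with hPY
  have hPXX : PX * ΦX = ΦX := by
    simp only [hPX, pinv, Matrix.mul_assoc]
    rw [hXinv, Matrix.mul_one]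
  have hPYY : PY * ΦY = ΦY := by
    simp only [hPY, pinv, Matrix.mul_assoc]
    rw [hYinv, Matrix.mul_one]
  have hsymm : ∀ (A : Matrix (Fin N) (Fin Nd) ℝ), (A * pinv A)ᵀ = A * pinv A := by
    intro A
    simp only [pinv, Matrix.transpose_mul, Matrix.transpose_transpose,
      Matrix.transpose_nonsing_inv]
    rw [Matrix.mul_assoc]
  have hPYs : PYᵀ = PY := hsymm ΦY
  have hPXs : PXᵀ = PX := hsymm ΦX
  have hpY1 : pinv ΦY * ΦY = 1 := by
    rw [pinv, Matrix.mul_assoc, hYinv]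
  have hPY2 : PY * PY = PY := by
    rw [hPY, ← Matrix.mul_assoc, Matrix.mul_assoc ΦY, hpY1, Matrix.mul_one]
  have hkey : ΦXᵀ * (PY * ΦX) = ΦXᵀ * ΦX := by
    have e1 : ΦXᵀ * ΦX * (pinv ΦX * ΦY * (pinv ΦY * ΦX)) = ΦXᵀ * (PY * ΦX) := by
      rw [hPY]
      simp only [pinv]
      rw [show (ΦXᵀ*ΦX)⁻¹*ΦXᵀ * ΦY * ((ΦYᵀ*ΦY)⁻¹*ΦYᵀ * ΦX)
          = (ΦXᵀ*ΦX)⁻¹ * (ΦXᵀ * (ΦY * ((ΦYᵀ*ΦY)⁻¹*ΦYᵀ) * ΦX)) by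
        simp only [Matrix.mul_assoc]]
      rw [Matrix.mul_nonsing_inv_cancel_left _ _ hXd]
    rw [← e1, h, Matrix.mul_one]
  have hZ : ΦX - PY * ΦX = 0 := by
    have h0 : (ΦX - PY * ΦX)ᵀ * (ΦX - PY * ΦX) = 0 := by
      simp only [Matrix.transpose_sub, Matrix.transpose_mul, hPYs, Matrix.sub_mul,
        Matrix.mul_sub]
      rw [Matrix.mul_assoc ΦXᵀ PY ΦX, hkey]
      rw [show ΦXᵀ * PY * (PY * ΦX) = ΦXᵀ * ((PY * PY) * ΦX) by simp only [Matrix.mul_assoc],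
        hPY2, hkey]
      abel
    have h1 : (ΦX - PY * ΦX)ᴴ * (ΦX - PY * ΦX) = 0 := by
      rwa [Matrix.conjTranspose_eq_transpose_of_trivial]
    exact Matrix.conjTranspose_mul_self_eq_zero.mp h1
  have hPYX : PY * ΦX = ΦX := (sub_eq_zero.mp hZ).symm
  set M := pinv ΦY * ΦX with hM
  have hXeq : ΦX = ΦY * M := by
    rw [hM, ← Matrix.mul_assoc, ← hPY, hPYX]
  have hcomm : M * (pinv ΦX * ΦY) = 1 := mul_eq_one_comm.mp h
  have hMd : IsUnit M.det := by
    apply IsUnit.of_mul_eq_one (pinv ΦX * ΦY).det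
    rw [← Matrix.det_mul, hcomm, Matrix.det_one]
  have hMM : M * M⁻¹ = 1 := Matrix.mul_nonsing_inv _ hMd
  have hYeq : ΦY = ΦX * M⁻¹ := by
    rw [hXeq, Matrix.mul_assoc, hMM, Matrix.mul_one]
  have hPXY : PX * ΦY = ΦY := by
    rw [hYeq, ← Matrix.mul_assoc, hPXX]
  have h1 : PX * PY = PY := by rw [hPY, ← Matrix.mul_assoc, hPXY]
  have h2 : PY * PX = PX := by rw [hPX, ← Matrix.mul_assoc, hPYX]
  have hProj : PY = PX := by
    have := congrArg Matrix.transpose h1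
    simp only [Matrix.transpose_mul, hPXs, hPYs] at this
    rw [← h2, this]
  refine ⟨le_antisymm ?_ ?_, hProj⟩
  · rintro v ⟨u, rfl⟩
    exact ⟨M.mulVec u, by simp [Matrix.mulVecLin_apply, Matrix.mulVec_mulVec, ← hXeq]⟩
  · rintro v ⟨u, rfl⟩
    exact ⟨M⁻¹.mulVec u, by simp [Matrix.mulVecLin_apply, Matrix.mulVec_mulVec, ← hYeq]⟩
end

section
/- Let Φ_X, Φ_Y ∈ ℝ^{N×N_d} have full column rank. If v ∈ ℝ^{N_d} is nonzero and satisfies M_C v = v (equivalently K_F K_B v = 0), then the vector w = Φ_X v is nonzero, lies in the column space of Φ_X, and is orthogonal to the column space of Φ_Y (i.e., Φ_Yᵀ w = 0). -/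
open Matrix

private lemma dp_transpose {N Nd : ℕ} (A : Matrix (Fin N) (Fin Nd) ℝ)
    (x : Fin Nd → ℝ) (y : Fin N → ℝ) :
    A.mulVec x ⬝ᵥ y = x ⬝ᵥ Aᵀ.mulVec y := by
  rw [dotProduct_comm, dotProduct_mulVec, dotProduct_comm, mulVec_transpose]

private lemma cancel_inv_mulVec {Nd : ℕ} (B : Matrix (Fin Nd) (Fin Nd) ℝ)
    (hB : IsUnit B.det) (w : Fin Nd → ℝ) : B.mulVec (B⁻¹.mulVec w) = w := by
  rw [mulVec_mulVec, mul_nonsing_inv _ hB, one_mulVec]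

/-- An eigenvector of M_C with eigenvalue 1 yields a nonzero vector in the column space
of ΦX orthogonal to the column space of ΦY. -/
theorem eigvec_one_gives_orthogonal_vector {N Nd : ℕ}
    (ΦX ΦY : Matrix (Fin N) (Fin Nd) ℝ)
    (hX : IsUnit (ΦXᵀ * ΦX)) (hY : IsUnit (ΦYᵀ * ΦY))
    (v : Fin Nd → ℝ) (hv : v ≠ 0)
    (heig : ((1 : Matrix (Fin Nd) (Fin Nd) ℝ) - pinv ΦX * ΦY * (pinv ΦY * ΦX)).mulVec v = v) :
    ΦX.mulVec v ≠ 0 ∧ ΦX.mulVec v ∈ LinearMap.range ΦX.mulVecLin ∧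
      ΦYᵀ.mulVec (ΦX.mulVec v) = 0 := by
  have hXdet : IsUnit (ΦXᵀ * ΦX).det := (isUnit_iff_isUnit_det _).mp hX
  have hYdet : IsUnit (ΦYᵀ * ΦY).det := (isUnit_iff_isUnit_det _).mp hY
  set u : Fin Nd → ℝ := ΦYᵀ.mulVec (ΦX.mulVec v) with hu
  set z : Fin Nd → ℝ := (ΦYᵀ * ΦY)⁻¹.mulVec u with hz
  -- K_F K_B v = 0
  have h0 : (ΦXᵀ * ΦX)⁻¹.mulVec (ΦXᵀ.mulVec (ΦY.mulVec z)) = 0 := by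
    rw [sub_mulVec, one_mulVec, sub_eq_self] at heig
    simpa only [pinv, ← mulVec_mulVec] using heig
  have h2 : ΦXᵀ.mulVec (ΦY.mulVec z) = 0 := by
    have := congrArg (fun w => (ΦXᵀ * ΦX).mulVec w) h0
    simpa only [cancel_inv_mulVec _ hXdet, mulVec_zero] using this
  have huz : u = (ΦYᵀ * ΦY).mulVec z := by
    rw [hz, cancel_inv_mulVec _ hYdet]
  -- dot with v : (Xv) ⬝ (Yz) = 0
  have h3 : ΦX.mulVec v ⬝ᵥ ΦY.mulVec z = 0 := by
    rw [dp_transpose, h2, dotProduct_zero]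
  have h4 : ΦY.mulVec z ⬝ᵥ ΦY.mulVec z = 0 := by
    have e1 : ΦX.mulVec v ⬝ᵥ ΦY.mulVec z = u ⬝ᵥ z := by
      rw [dotProduct_comm, dp_transpose, ← hu, dotProduct_comm]
    have e2 : u ⬝ᵥ z = ΦY.mulVec z ⬝ᵥ ΦY.mulVec z := by
      rw [dotProduct_comm, huz, ← mulVec_mulVec, ← dp_transpose]
    rw [← e2, ← e1, h3]
  have hYz : ΦY.mulVec z = 0 := dotProduct_self_eq_zero.mp h4
  have hu0 : u = 0 := by rw [huz, ← mulVec_mulVec, hYz, mulVec_zero]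
  refine ⟨?_, ⟨v, rfl⟩, hu0⟩
  intro hXv
  apply hv
  have h5 : (ΦXᵀ * ΦX).mulVec v = 0 := by rw [← mulVec_mulVec, hXv, mulVec_zero]
  have hinj := Matrix.mulVec_injective_iff_isUnit.mpr hX
  exact hinj (a₁ := v) (a₂ := 0) (by simpa using h5)
end

section
/- Let Φ_X, Φ_Y ∈ ℝ^{N×N_d} have full column rank. If there exists a nonzero vector w ∈ ℝ^{N} lying in the column space of Φ_X and orthogonal to the column space of Φ_Y (Φ_Yᵀ w = 0), then 1 is an eigenvalue of the consistency matrix M_C = I − K_F K_B; equivalently, there exists a nonzero p ∈ ℝ^{N_d} with K_F K_B p = 0. -/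
open Matrix

/-- A nonzero vector in the column space of ΦX orthogonal to the column space of ΦY
forces 1 to be an eigenvalue of the consistency matrix. -/
theorem eigenvalue_one_of_orthogonal_vector {N Nd : ℕ}
    (ΦX ΦY : Matrix (Fin N) (Fin Nd) ℝ)
    (hX : IsUnit (ΦXᵀ * ΦX)) (hY : IsUnit (ΦYᵀ * ΦY))
    (w : Fin N → ℝ) (hw : w ≠ 0)
    (hwX : w ∈ LinearMap.range ΦX.mulVecLin)
    (hwY : ΦYᵀ.mulVec w = 0) :
    Module.End.HasEigenvalue
        ((((1 : Matrix (Fin Nd) (Fin Nd) ℝ) - pinv ΦX * ΦY * (pinv ΦY * ΦX)).mulVecLin :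
          Module.End ℝ (Fin Nd → ℝ))) 1 ∧
      ∃ p : Fin Nd → ℝ, p ≠ 0 ∧ (pinv ΦX * ΦY * (pinv ΦY * ΦX)).mulVec p = 0 := by
  obtain ⟨p, hp⟩ := hwX
  simp only [mulVecLin_apply] at hp
  have hp0 : p ≠ 0 := by
    rintro rfl
    exact hw (by rw [← hp, mulVec_zero])
  have hKB : (pinv ΦY * ΦX).mulVec p = 0 := by
    unfold pinv
    rw [Matrix.mul_assoc, ← mulVec_mulVec, ← mulVec_mulVec, hp, hwY, mulVec_zero]

  have hK : (pinv ΦX * ΦY * (pinv ΦY * ΦX)).mulVec p = 0 := by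
    rw [← mulVec_mulVec, hKB, mulVec_zero]
  refine ⟨?_, p, hp0, hK⟩
  apply Module.End.hasEigenvalue_of_hasEigenvector (x := p)
  constructor
  · rw [Module.End.mem_eigenspace_iff, mulVecLin_apply, sub_mulVec, hK, one_mulVec,
      sub_zero, one_smul]
  · exact hp0
end

section
/- Let Φ_X, Φ_Y ∈ ℝ^{N×N_d} have full column rank. Then sqrt(I_C) = sprad(P_Y − P_X), i.e., the square root of the spectral radius of the consistency matrix M_C = I − Φ_X†Φ_Y Φ_Y†Φ_X equals the spectral radius of the difference of orthogonal projections Φ_Y Φ_Y† − Φ_X Φ_X†. -/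
open Matrix

/-- Spectral radius of a real square matrix: max modulus of its complex eigenvalues. -/
noncomputable def sprad {n : ℕ} (A : Matrix (Fin n) (Fin n) ℝ) : ℝ :=
  sSup ((fun z : ℂ => ‖z‖) '' spectrum ℂ (A.map Complex.ofReal))

section Helpers

variable {n m a b c : Type*} [Fintype n] [DecidableEq n] [Fintype m] [DecidableEq m]
  [Fintype a] [Fintype b] [Fintype c]

lemma algmap_mulVec (z : ℂ) (v : n → ℂ) :
    (algebraMap ℂ (Matrix n n ℂ) z) *ᵥ v = z • v := by
  rw [Matrix.algebraMap_eq_diagonal]; ext i; simp [Matrix.mulVec_diagonal]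

lemma mem_spec_iff {A : Matrix n n ℂ} {z : ℂ} :
    z ∈ spectrum ℂ A ↔ ∃ v, v ≠ 0 ∧ A *ᵥ v = z • v := by
  rw [spectrum.mem_iff, Matrix.isUnit_iff_isUnit_det, isUnit_iff_ne_zero, not_ne_iff,
    ← Matrix.exists_mulVec_eq_zero_iff]
  constructor
  · rintro ⟨v, hv, h⟩
    refine ⟨v, hv, ?_⟩
    rw [Matrix.sub_mulVec, sub_eq_zero, algmap_mulVec] at h
    exact h.symm
  · rintro ⟨v, hv, h⟩
    exact ⟨v, hv, by rw [Matrix.sub_mulVec, sub_eq_zero, algmap_mulVec, h]⟩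

/-- nonzero spectrum of `A*B` is contained in that of `B*A` -/
lemma spec_mul_comm {A : Matrix m n ℂ} {B : Matrix n m ℂ} {z : ℂ} (hz : z ≠ 0)
    (h : z ∈ spectrum ℂ (A * B)) : z ∈ spectrum ℂ (B * A) := by
  obtain ⟨v, hv, hev⟩ := mem_spec_iff.mp h
  refine mem_spec_iff.mpr ⟨B *ᵥ v, ?_, ?_⟩
  · intro h0
    apply hv
    have : (A * B) *ᵥ v = 0 := by rw [← Matrix.mulVec_mulVec, h0, Matrix.mulVec_zero]
    rw [hev] at this
    exact (smul_eq_zero_iff_right hz).mp this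
  · rw [← Matrix.mulVec_mulVec, Matrix.mulVec_mulVec v A B, hev, Matrix.mulVec_smul]

/-- eigenvalue passes to idempotent-fixed eigenvector -/
lemma fixed_of_eigen {q M : Matrix n n ℂ} {z : ℂ} {y : n → ℂ} (hz : z ≠ 0)
    (hqM : q * M = M) (h : M *ᵥ y = z • y) : q *ᵥ y = y := by
  have h1 : q *ᵥ (M *ᵥ y) = M *ᵥ y := by rw [Matrix.mulVec_mulVec, hqM]
  rw [h, Matrix.mulVec_smul] at h1
  exact smul_right_injective _ hz h1

lemma spec_add_of_left {S T : Matrix n n ℂ} {z : ℂ} (hz : z ≠ 0) (hTS : T * S = 0)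
    (h : z ∈ spectrum ℂ S) : z ∈ spectrum ℂ (S + T) := by
  obtain ⟨v, hv, hev⟩ := mem_spec_iff.mp h
  have hT : T *ᵥ v = 0 := by
    have : T *ᵥ (S *ᵥ v) = 0 := by rw [Matrix.mulVec_mulVec, hTS, Matrix.zero_mulVec]
    rw [hev, Matrix.mulVec_smul] at this
    exact (smul_eq_zero_iff_right hz).mp this
  exact mem_spec_iff.mpr ⟨v, hv, by rw [Matrix.add_mulVec, hev, hT, add_zero]⟩

lemma spec_add_split {S T : Matrix n n ℂ} {z : ℂ} (hST : S * T = 0)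
    (h : z ∈ spectrum ℂ (S + T)) : z ∈ spectrum ℂ S ∨ z ∈ spectrum ℂ T := by
  obtain ⟨v, hv, hev⟩ := mem_spec_iff.mp h
  by_cases hSv : S *ᵥ v = 0
  · right
    refine mem_spec_iff.mpr ⟨v, hv, ?_⟩
    rw [Matrix.add_mulVec, hSv, zero_add] at hev
    exact hev
  · left
    refine mem_spec_iff.mpr ⟨S *ᵥ v, hSv, ?_⟩
    have : S *ᵥ ((S + T) *ᵥ v) = z • (S *ᵥ v) := by rw [hev, Matrix.mulVec_smul]
    rw [Matrix.mulVec_mulVec, Matrix.mul_add, hST, add_zero, ← Matrix.mulVec_mulVec] at this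
    exact this

lemma eq_zero_of_isUnit_mulVec {A : Matrix n n ℂ} (hA : IsUnit A) {u : n → ℂ}
    (h : A *ᵥ u = 0) : u = 0 := by
  have h2 : A⁻¹ *ᵥ (A *ᵥ u) = u := by
    rw [Matrix.mulVec_mulVec, Matrix.nonsing_inv_mul _ ((Matrix.isUnit_iff_isUnit_det A).mp hA),
      Matrix.one_mulVec]
  rw [h, Matrix.mulVec_zero] at h2
  exact h2.symm

lemma mapC_mul (A : Matrix a b ℝ) (B : Matrix b c ℝ) :
    (A * B).map Complex.ofReal = A.map Complex.ofReal * B.map Complex.ofReal := by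
  exact Matrix.map_mul (f := Complex.ofRealHom)

lemma mapC_one : ((1 : Matrix n n ℝ)).map Complex.ofReal = 1 := by
  ext i j
  simp [Matrix.one_apply, apply_ite Complex.ofReal]

lemma mapC_sub (A B : Matrix a b ℝ) :
    (A - B).map Complex.ofReal = A.map Complex.ofReal - B.map Complex.ofReal := by
  ext i j; simp

lemma mapC_conjTranspose (A : Matrix a b ℝ) :
    (A.map Complex.ofReal)ᴴ = Aᵀ.map Complex.ofReal := by
  ext i j
  simp [Matrix.conjTranspose_apply, Complex.conj_ofReal]

lemma star_dot_self_eq_zero {v : n → ℂ} (h : dotProduct (star v) v = 0) : v = 0 := by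
  have h1 : (↑(∑ i, Complex.normSq (v i)) : ℂ) = 0 := by
    rw [← h]
    simp [dotProduct, Complex.normSq_eq_conj_mul_self]
  rw [Complex.ofReal_eq_zero] at h1
  funext i
  have h2 := (Finset.sum_eq_zero_iff_of_nonneg
    (fun i _ => Complex.normSq_nonneg (v i))).mp h1 i (Finset.mem_univ i)
  exact Complex.normSq_eq_zero.mp h2

lemma key {Nn Nd : Type*} [Fintype Nn] [DecidableEq Nn] [Fintype Nd] [DecidableEq Nd]
    (X Y : Matrix Nn Nd ℂ) (Xp Yp : Matrix Nd Nn ℂ)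
    (hXpX : Xp * X = 1) (hYpY : Yp * Y = 1)
    (hpH : (X * Xp)ᴴ = X * Xp) (hqH : (Y * Yp)ᴴ = Y * Yp)
    (hXinj : ∀ u : Nd → ℂ, X *ᵥ u = 0 → u = 0)
    {z : ℂ} (hz : z ≠ 0) :
    z ∈ spectrum ℂ ((1 : Matrix Nd Nd ℂ) - Xp * Y * (Yp * X)) ↔
      z ∈ spectrum ℂ ((Y * Yp - X * Xp) * (Y * Yp - X * Xp)) := by
  set p := X * Xp with hpdef
  set q := Y * Yp with hqdef
  have hp : p * p = p := by
    rw [hpdef, Matrix.mul_assoc, ← Matrix.mul_assoc Xp X Xp, hXpX, Matrix.one_mul]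
  have hq : q * q = q := by
    rw [hqdef, Matrix.mul_assoc, ← Matrix.mul_assoc Yp Y Yp, hYpY, Matrix.one_mul]
  have hq1 : ((1 : Matrix Nn Nn ℂ) - q) * (1 - q) = 1 - q := by
    simp [mul_sub, sub_mul, hq]
  have hp1 : ((1 : Matrix Nn Nn ℂ) - p) * (1 - p) = 1 - p := by
    simp [mul_sub, sub_mul, hp]
  set S := (p * (1 - q)) * ((1 - q) * p) with hSdef
  set T := ((1 - p) * q) * (q * (1 - p)) with hTdef
  have hM1 : (Xp * (1 - q)) * ((1 - q) * X) = 1 - Xp * Y * (Yp * X) := by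
    rw [Matrix.mul_assoc Xp (1 - q) ((1 - q) * X), ← Matrix.mul_assoc (1 - q) (1 - q) X,
      hq1, ← Matrix.mul_assoc, Matrix.mul_sub, Matrix.mul_one, Matrix.sub_mul, hXpX, hqdef,
      ← Matrix.mul_assoc Xp Y Yp, Matrix.mul_assoc (Xp * Y) Yp X]
  have e2 : ((1 - q) * X) * (Xp * (1 - q)) = ((1 - q) * p) * (p * (1 - q)) := by
    have h1 : ((1 - q) * X) * (Xp * (1 - q)) = (1 - q) * p * (1 - q) := by
      rw [Matrix.mul_assoc (1 - q) X (Xp * (1 - q)), ← Matrix.mul_assoc X Xp (1 - q),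
        ← Matrix.mul_assoc (1 - q) (X * Xp) (1 - q), ← hpdef]
    have h2 : ((1 - q) * p) * (p * (1 - q)) = (1 - q) * p * (1 - q) := by
      rw [Matrix.mul_assoc (1 - q) p (p * (1 - q)), ← Matrix.mul_assoc p p (1 - q), hp,
        ← Matrix.mul_assoc]
    rw [h1, h2]
  have hSS' : ∀ w : ℂ, w ≠ 0 →
      (w ∈ spectrum ℂ ((1 : Matrix Nd Nd ℂ) - Xp * Y * (Yp * X)) ↔ w ∈ spectrum ℂ S) := by
    intro w hw
    constructor
    · intro h
      rw [← hM1] at h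
      have h2 := spec_mul_comm hw h
      rw [e2] at h2
      have h3 := spec_mul_comm hw h2
      rw [hSdef]
      exact h3
    · intro h
      rw [hSdef] at h
      have h2 := spec_mul_comm hw h
      rw [← e2] at h2
      have h3 := spec_mul_comm hw h2
      rw [hM1] at h3
      exact h3
  have hS2 : S = p - p * q * p := by
    rw [hSdef]
    have e : (p * (1 - q)) * ((1 - q) * p) = p * ((1 - q) * (1 - q)) * p := by noncomm_ring
    rw [e, hq1, mul_sub, mul_one, sub_mul, hp]
  have hT2 : T = q - p * q - q * p + p * q * p := by
    rw [hTdef]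
    have e : ((1 - p) * q) * (q * (1 - p)) = (1 - p) * (q * q) * (1 - p) := by noncomm_ring
    rw [e, hq]
    noncomm_ring
  have hD2 : (q - p) * (q - p) = S + T := by
    rw [hS2, hT2]
    have e : (q - p) * (q - p) = q * q - q * p - p * q + p * p := by noncomm_ring
    rw [e, hp, hq]
    abel
  have hST : S * T = 0 := by
    have h0 : p * (1 - p) = 0 := by rw [mul_sub, mul_one, hp, sub_self]
    have e : S * T = (p * (1 - q)) * ((1 - q) * (p * (1 - p))) * (q * (q * (1 - p))) := by
      rw [hSdef, hTdef]; noncomm_ring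
    rw [e, h0]
    simp
  have hTS : T * S = 0 := by
    have h0 : ((1 : Matrix Nn Nn ℂ) - p) * p = 0 := by rw [sub_mul, one_mul, hp, sub_self]
    have e : T * S = ((1 - p) * q) * (q * ((1 - p) * p)) * ((1 - q) * ((1 - q) * p)) := by
      rw [hTdef, hSdef]; noncomm_ring
    rw [e, h0]
    simp
  constructor
  · intro h
    have hs := (hSS' z hz).mp h
    rw [hD2]
    exact spec_add_of_left hz hTS hs
  · intro h
    rw [hD2] at h
    rcases spec_add_split hST h with hs | ht
    · exact (hSS' z hz).mpr hs
    · -- T branch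
      rw [hTdef] at ht
      have h2 := spec_mul_comm hz ht
      have eT' : (q * (1 - p)) * ((1 - p) * q) = q - q * p * q := by
        have e : (q * (1 - p)) * ((1 - p) * q) = q * ((1 - p) * (1 - p)) * q := by noncomm_ring
        rw [e, hp1, mul_sub, mul_one, sub_mul, hq]
      rw [eT'] at h2
      obtain ⟨y, hy, hTy⟩ := mem_spec_iff.mp h2
      have hqfix : q * (q - q * p * q) = q - q * p * q := by
        have e : q * (q - q * p * q) = q * q - (q * q) * p * q := by noncomm_ring
        rw [e, hq]
      have hqy : q *ᵥ y = y := fixed_of_eigen hz hqfix hTy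
      have hqpqy : (q * p * q) *ᵥ y = (1 - z) • y := by
        have h4 : y - (q * p * q) *ᵥ y = z • y := by
          have h5 : (q - q * p * q) *ᵥ y = q *ᵥ y - (q * p * q) *ᵥ y := Matrix.sub_mulVec _ _ _
          rw [hTy, hqy] at h5
          exact h5.symm
        have h6 : (q * p * q) *ᵥ y = y - z • y := eq_sub_of_add_eq' (sub_eq_iff_eq_add.mp h4).symm
        rw [h6, sub_smul, one_smul]
      by_cases hz1 : z = 1
      · subst hz1
        have hqpq0 : (q * p * q) *ᵥ y = 0 := by rw [hqpqy]; simp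
        have hpy : p *ᵥ y = 0 := by
          have hdot : star (p *ᵥ y) ⬝ᵥ (p *ᵥ y) = 0 := by
            rw [Matrix.star_mulVec, hpH, ← Matrix.dotProduct_mulVec, Matrix.mulVec_mulVec, hp]
            conv_lhs => rw [← hqy]
            rw [Matrix.star_mulVec, hqH, ← Matrix.dotProduct_mulVec, Matrix.mulVec_mulVec,
              Matrix.mulVec_mulVec, hqpq0]
            simp
          exact star_dot_self_eq_zero hdot
        have hXpy : Xp *ᵥ y = 0 := by
          apply hXinj
          rw [Matrix.mulVec_mulVec, ← hpdef]
          exact hpy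
        have hv : Yp *ᵥ y ≠ 0 := by
          intro h0
          apply hy
          have hqy0 : q *ᵥ y = 0 := by
            rw [hqdef, ← Matrix.mulVec_mulVec, h0, Matrix.mulVec_zero]
          rw [hqy] at hqy0
          exact hqy0
        have hdet : ((Xp * Y) : Matrix Nd Nd ℂ).det = 0 := by
          rw [← Matrix.exists_mulVec_eq_zero_iff]
          refine ⟨Yp *ᵥ y, hv, ?_⟩
          rw [← Matrix.mulVec_mulVec, Matrix.mulVec_mulVec y Y Yp, ← hqdef, hqy, hXpy]
        rw [spectrum.mem_iff]
        intro hu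
        rw [_root_.map_one, sub_sub_cancel, Matrix.isUnit_iff_isUnit_det, Matrix.det_mul, hdet,
          zero_mul] at hu
        exact hu.ne_zero rfl
      · have hμ : (1 : ℂ) - z ≠ 0 := sub_ne_zero.mpr (Ne.symm hz1)
        have hμs : (1 - z) ∈ spectrum ℂ (q * p * q) := mem_spec_iff.mpr ⟨y, hy, hqpqy⟩
        have e3 : (q * p) * (p * q) = q * p * q := by
          rw [Matrix.mul_assoc q p (p * q), ← Matrix.mul_assoc p p q, hp, ← Matrix.mul_assoc]
        rw [← e3] at hμs
        have hμs2 := spec_mul_comm hμ hμs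
        have e4 : (p * q) * (q * p) = p * q * p := by
          rw [Matrix.mul_assoc p q (q * p), ← Matrix.mul_assoc q q p, hq, ← Matrix.mul_assoc]
        rw [e4] at hμs2
        obtain ⟨x, hx, hPx⟩ := mem_spec_iff.mp hμs2
        have hpfix : p * (p * q * p) = p * q * p := by
          have e5 : p * (p * q * p) = (p * p) * q * p := by noncomm_ring
          rw [e5, hp]
        have hpx : p *ᵥ x = x := fixed_of_eigen hμ hpfix hPx
        have hSx : S *ᵥ x = z • x := by
          rw [hS2, Matrix.sub_mulVec, hpx, hPx, sub_smul, one_smul, sub_sub_cancel]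
        exact (hSS' z hz).mpr (mem_spec_iff.mpr ⟨x, hx, hSx⟩)

end Helpers

/-- The square root of the consistency index equals the spectral radius of the
difference of the orthogonal projections. -/
theorem sqrt_consistency_index_eq_sprad_proj_diff {N Nd : ℕ}
    (ΦX ΦY : Matrix (Fin N) (Fin Nd) ℝ)
    (hX : IsUnit (ΦXᵀ * ΦX)) (hY : IsUnit (ΦYᵀ * ΦY)) :
    Real.sqrt (sprad ((1 : Matrix (Fin Nd) (Fin Nd) ℝ) - pinv ΦX * ΦY * (pinv ΦY * ΦX))) =
      sprad (ΦY * pinv ΦY - ΦX * pinv ΦX) := by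
  classical
  rcases Nat.eq_zero_or_pos Nd with hNd | hNd
  · -- degenerate case `Nd = 0`
    subst hNd
    have hL : spectrum ℂ
        (((1 : Matrix (Fin 0) (Fin 0) ℝ) - pinv ΦX * ΦY * (pinv ΦY * ΦX)).map Complex.ofReal)
        = ∅ := by
      ext z
      simp [spectrum.mem_iff, isUnit_of_subsingleton]
    have hR : (ΦY * pinv ΦY - ΦX * pinv ΦX : Matrix (Fin N) (Fin N) ℝ) = 0 := by
      ext i j
      simp [Matrix.mul_apply, Matrix.sub_apply]
    rw [sprad, sprad, hL, hR]
    rcases Nat.eq_zero_or_pos N with hN | hN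
    · subst hN
      have hR0 : spectrum ℂ ((0 : Matrix (Fin 0) (Fin 0) ℝ).map Complex.ofReal) = ∅ := by
        ext z
        simp [spectrum.mem_iff, isUnit_of_subsingleton]
      rw [hR0]
      simp [Real.sSup_empty]
    · have : Nonempty (Fin N) := ⟨⟨0, hN⟩⟩
      have h0 : ((0 : Matrix (Fin N) (Fin N) ℝ).map Complex.ofReal) = 0 := by
        ext i j; simp
      rw [h0, spectrum.zero_eq]
      simp [Real.sSup_empty]
  · -- main case
    have hNpos : 0 < N := by
      rcases Nat.eq_zero_or_pos N with hN | hN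
      · exfalso
        subst hN
        have h0 : (ΦXᵀ * ΦX) = 0 := by
          ext i j; simp [Matrix.mul_apply]
        rw [h0] at hX
        have h01 := isUnit_zero_iff.mp hX
        have h2 := Matrix.ext_iff.mpr h01 ⟨0, hNd⟩ ⟨0, hNd⟩
        simp [Matrix.one_apply] at h2
      · exact hN
    haveI : Nonempty (Fin Nd) := ⟨⟨0, hNd⟩⟩
    haveI : Nonempty (Fin N) := ⟨⟨0, hNpos⟩⟩
    have hXpXr : pinv ΦX * ΦX = 1 := by
      rw [pinv, Matrix.mul_assoc,
        Matrix.nonsing_inv_mul _ ((Matrix.isUnit_iff_isUnit_det _).mp hX)]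
    have hYpYr : pinv ΦY * ΦY = 1 := by
      rw [pinv, Matrix.mul_assoc,
        Matrix.nonsing_inv_mul _ ((Matrix.isUnit_iff_isUnit_det _).mp hY)]
    have hXpX : (pinv ΦX).map Complex.ofReal * ΦX.map Complex.ofReal = 1 := by
      rw [← mapC_mul, hXpXr, mapC_one]
    have hYpY : (pinv ΦY).map Complex.ofReal * ΦY.map Complex.ofReal = 1 := by
      rw [← mapC_mul, hYpYr, mapC_one]
    have hPtrX : (ΦX * pinv ΦX)ᵀ = ΦX * pinv ΦX := by
      rw [pinv, Matrix.transpose_mul, Matrix.transpose_mul, Matrix.transpose_nonsing_inv,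
        Matrix.transpose_mul, Matrix.transpose_transpose, Matrix.mul_assoc]
    have hPtrY : (ΦY * pinv ΦY)ᵀ = ΦY * pinv ΦY := by
      rw [pinv, Matrix.transpose_mul, Matrix.transpose_mul, Matrix.transpose_nonsing_inv,
        Matrix.transpose_mul, Matrix.transpose_transpose, Matrix.mul_assoc]
    have hpH : (ΦX.map Complex.ofReal * (pinv ΦX).map Complex.ofReal)ᴴ
        = ΦX.map Complex.ofReal * (pinv ΦX).map Complex.ofReal := by
      rw [← mapC_mul, mapC_conjTranspose, hPtrX]
    have hqH : (ΦY.map Complex.ofReal * (pinv ΦY).map Complex.ofReal)ᴴ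
        = ΦY.map Complex.ofReal * (pinv ΦY).map Complex.ofReal := by
      rw [← mapC_mul, mapC_conjTranspose, hPtrY]
    have hXinj : ∀ u : Fin Nd → ℂ, ΦX.map Complex.ofReal *ᵥ u = 0 → u = 0 := by
      intro u hu
      have hG : IsUnit ((ΦXᵀ * ΦX).map Complex.ofReal) := by
        have h := hX.map (Complex.ofRealHom.mapMatrix)
        rw [RingHom.mapMatrix_apply] at h
        exact h
      apply eq_zero_of_isUnit_mulVec hG
      rw [mapC_mul, ← Matrix.mulVec_mulVec, hu, Matrix.mulVec_zero]
    have hkey := fun (w : ℂ) (hw : w ≠ 0) => key (ΦX.map Complex.ofReal) (ΦY.map Complex.ofReal)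
      ((pinv ΦX).map Complex.ofReal) ((pinv ΦY).map Complex.ofReal)
      hXpX hYpY hpH hqH hXinj hw
    rw [sprad, sprad]
    simp only [mapC_sub, mapC_one, mapC_mul]
    set Mm : Matrix (Fin Nd) (Fin Nd) ℂ := 1 - (pinv ΦX).map Complex.ofReal * ΦY.map Complex.ofReal
      * ((pinv ΦY).map Complex.ofReal * ΦX.map Complex.ofReal) with hMmdef
    set Dm : Matrix (Fin N) (Fin N) ℂ := ΦY.map Complex.ofReal * (pinv ΦY).map Complex.ofReal
      - ΦX.map Complex.ofReal * (pinv ΦX).map Complex.ofReal with hDmdef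
    have hMfin := Matrix.finite_spectrum (R := ℂ) Mm
    have hDfin := Matrix.finite_spectrum (R := ℂ) Dm
    have hMne : (spectrum ℂ Mm).Nonempty :=
      spectrum.nonempty_of_isAlgClosed_of_finiteDimensional ℂ Mm
    have hDne : (spectrum ℂ Dm).Nonempty :=
      spectrum.nonempty_of_isAlgClosed_of_finiteDimensional ℂ Dm
    have hpow : spectrum ℂ (Dm ^ 2) = (fun w => w ^ 2) '' spectrum ℂ Dm :=
      spectrum.map_pow_of_nonempty hDne 2
    have hAbdd : BddAbove ((fun z : ℂ => ‖z‖) '' spectrum ℂ Mm) :=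
      (hMfin.image _).bddAbove
    have hBbdd : BddAbove ((fun z : ℂ => ‖z‖) '' spectrum ℂ Dm) :=
      (hDfin.image _).bddAbove
    have hAne : ((fun z : ℂ => ‖z‖) '' spectrum ℂ Mm).Nonempty := hMne.image _
    have hBne : ((fun z : ℂ => ‖z‖) '' spectrum ℂ Dm).Nonempty := hDne.image _
    have ha0 : 0 ≤ sSup ((fun z : ℂ => ‖z‖) '' spectrum ℂ Mm) := by
      obtain ⟨w, hw⟩ := hMne
      exact le_trans (norm_nonneg w) (le_csSup hAbdd ⟨w, hw, rfl⟩)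
    have hb0 : 0 ≤ sSup ((fun z : ℂ => ‖z‖) '' spectrum ℂ Dm) := by
      obtain ⟨w, hw⟩ := hDne
      exact le_trans (norm_nonneg w) (le_csSup hBbdd ⟨w, hw, rfl⟩)
    have hle : sSup ((fun z : ℂ => ‖z‖) '' spectrum ℂ Mm)
        ≤ (sSup ((fun z : ℂ => ‖z‖) '' spectrum ℂ Dm)) ^ 2 := by
      apply csSup_le hAne
      rintro r ⟨w, hw, rfl⟩
      by_cases hw0 : w = 0
      · subst hw0
        simpa using sq_nonneg (sSup ((fun z : ℂ => ‖z‖) '' spectrum ℂ Dm))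
      · have h2 : w ∈ spectrum ℂ (Dm * Dm) := (hkey w hw0).mp hw
        have h3 : w ∈ spectrum ℂ (Dm ^ 2) := by rwa [pow_two]
        rw [hpow] at h3
        obtain ⟨u, hu, huw⟩ := h3
        rw [← huw]
        show ‖u ^ 2‖ ≤ _
        rw [norm_pow]
        exact pow_le_pow_left₀ (norm_nonneg u)
          (le_csSup hBbdd ⟨u, hu, rfl⟩) 2
    have hge : (sSup ((fun z : ℂ => ‖z‖) '' spectrum ℂ Dm)) ^ 2
        ≤ sSup ((fun z : ℂ => ‖z‖) '' spectrum ℂ Mm) := by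
      have hmem : sSup ((fun z : ℂ => ‖z‖) '' spectrum ℂ Dm)
          ∈ (fun z : ℂ => ‖z‖) '' spectrum ℂ Dm :=
        hBne.csSup_mem (hDfin.image _)
      obtain ⟨w, hw, hws⟩ := hmem
      rw [← hws]
      show ‖w‖ ^ 2 ≤ _
      rw [← norm_pow]
      by_cases hw0 : w ^ 2 = 0
      · rw [hw0, norm_zero]
        exact ha0
      · have h2 : w ^ 2 ∈ spectrum ℂ (Dm ^ 2) := hpow ▸ ⟨w, hw, rfl⟩
        rw [pow_two] at h2
        have h3 := (hkey _ hw0).mpr h2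
        exact le_csSup hAbdd ⟨w ^ 2, h3, rfl⟩
    have hab : sSup ((fun z : ℂ => ‖z‖) '' spectrum ℂ Mm)
        = (sSup ((fun z : ℂ => ‖z‖) '' spectrum ℂ Dm)) ^ 2 :=
      le_antisymm hle hge
    rw [hab, Real.sqrt_sq hb0]
end

section
/- Let Φ_X, Φ_Y ∈ ℝ^{N×N_d} have full column rank and set s = sprad(P_Y − P_X), the spectral radius of the difference of projections Φ_Y Φ_Y† − Φ_X Φ_X†. Then for every v ∈ ℝ^{N_d}, ‖Φ_Y v − Φ_X K_F v‖₂ ≤ s · ‖Φ_Y v‖₂, where K_F = Φ_X†Φ_Y and ‖·‖₂ is the Euclidean norm on ℝ^N. -/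
open Matrix

/-- Euclidean (2-)norm on `Fin n → ℝ`. -/
noncomputable def enorm₂ {n : ℕ} (x : Fin n → ℝ) : ℝ := Real.sqrt (∑ i, x i ^ 2)

lemma enorm_orth {n : ℕ} {U : Matrix (Fin n) (Fin n) ℝ} (h : Uᵀ * U = 1)
    (x : Fin n → ℝ) : enorm₂ (U *ᵥ x) = enorm₂ x := by
  have key : (U *ᵥ x) ⬝ᵥ (U *ᵥ x) = x ⬝ᵥ x := by
    calc (U *ᵥ x) ⬝ᵥ (U *ᵥ x) = (x ᵥ* Uᵀ) ⬝ᵥ (U *ᵥ x) := by rw [Matrix.vecMul_transpose]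
      _ = x ⬝ᵥ (Uᵀ *ᵥ (U *ᵥ x)) := (Matrix.dotProduct_mulVec _ _ _).symm
      _ = x ⬝ᵥ ((Uᵀ * U) *ᵥ x) := by rw [Matrix.mulVec_mulVec]
      _ = x ⬝ᵥ x := by rw [h, Matrix.one_mulVec]
  unfold enorm₂
  congr 1
  simpa [dotProduct, sq] using key

lemma mem_spectrum_complex {n : ℕ} {D : Matrix (Fin n) (Fin n) ℝ} {μ : ℝ}
    (h : μ ∈ spectrum ℝ D) : (μ : ℂ) ∈ spectrum ℂ (D.map Complex.ofReal) := by
  rw [spectrum.mem_iff] at h ⊢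
  intro hu
  apply h
  have hmap : algebraMap ℂ (Matrix (Fin n) (Fin n) ℂ) (μ : ℂ) - D.map Complex.ofReal
      = (algebraMap ℝ (Matrix (Fin n) (Fin n) ℝ) μ - D).map Complex.ofReal := by
    ext i j
    simp [Matrix.algebraMap_matrix_apply, Matrix.sub_apply, Matrix.map_apply, apply_ite]
  rw [hmap, Matrix.isUnit_iff_isUnit_det] at hu
  rw [Matrix.isUnit_iff_isUnit_det]
  have hdet : Complex.ofReal ((algebraMap ℝ (Matrix (Fin n) (Fin n) ℝ) μ - D).det)
      = ((algebraMap ℝ (Matrix (Fin n) (Fin n) ℝ) μ - D).map Complex.ofReal).det :=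
    RingHom.map_det Complex.ofRealHom _
  rw [← hdet] at hu
  simp only [isUnit_iff_ne_zero] at hu ⊢
  intro h0
  apply hu
  simpa using congrArg Complex.ofReal h0

lemma herm_bound {n : ℕ} {D : Matrix (Fin n) (Fin n) ℝ} (hD : D.IsHermitian)
    (w : Fin n → ℝ) : enorm₂ (D *ᵥ w) ≤ sprad D * enorm₂ w := by
  rcases Nat.eq_zero_or_pos n with hn | hn
  · subst hn
    simp [enorm₂]
  haveI : Nonempty (Fin n) := ⟨⟨0, hn⟩⟩
  -- every eigenvalue is bounded in absolute value by the spectral radius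
  have hbdd : BddAbove ((fun z : ℂ => ‖z‖) '' spectrum ℂ (D.map Complex.ofReal)) :=
    ((Matrix.finite_spectrum _).image _).bddAbove
  have hstep : ∀ i, |hD.eigenvalues i| ≤ sprad D := by
    intro i
    have hmem : ((hD.eigenvalues i : ℝ) : ℂ) ∈ spectrum ℂ (D.map Complex.ofReal) :=
      mem_spectrum_complex (hD.eigenvalues_mem_spectrum_real i)
    have : ‖((hD.eigenvalues i : ℝ) : ℂ)‖
        ∈ (fun z : ℂ => ‖z‖) '' spectrum ℂ (D.map Complex.ofReal) :=
      ⟨_, hmem, rfl⟩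
    have := le_csSup hbdd this
    simpa [Complex.norm_real, Real.norm_eq_abs, sprad] using this
  have hs0 : 0 ≤ sprad D := le_trans (abs_nonneg _) (hstep ⟨0, hn⟩)
  -- spectral decomposition
  set U : Matrix (Fin n) (Fin n) ℝ := (hD.eigenvectorUnitary : Matrix (Fin n) (Fin n) ℝ) with hUdef
  have hstar : star U = Uᵀ := by
    rw [Matrix.star_eq_conjTranspose, Matrix.conjTranspose_eq_transpose_of_trivial]
  have hU1 : Uᵀ * U = 1 := by
    rw [← hstar]; exact (Matrix.mem_unitaryGroup_iff'.mp hD.eigenvectorUnitary.2)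
  have hU2 : U * Uᵀ = 1 := by
    rw [← hstar]; exact (Matrix.mem_unitaryGroup_iff.mp hD.eigenvectorUnitary.2)
  set lam := hD.eigenvalues with hlam
  set u : Fin n → ℝ := Uᵀ *ᵥ w with hu
  have hw : w = U *ᵥ u := by
    rw [hu, Matrix.mulVec_mulVec, hU2, Matrix.one_mulVec]
  have hDdecomp : D = U * Matrix.diagonal lam * Uᵀ := by
    have h := hD.spectral_theorem
    rw [Unitary.conjStarAlgAut_apply, ← hUdef, hstar] at h
    have hdiageq : Matrix.diagonal (RCLike.ofReal ∘ lam) = Matrix.diagonal lam := by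
      congr 1
    rw [hdiageq] at h
    exact h
  have hdiag : Matrix.diagonal lam *ᵥ u = fun i => lam i * u i := by
    funext i
    rw [Matrix.mulVec_diagonal]
  have hDw : D *ᵥ w = U *ᵥ (fun i => lam i * u i) := by
    rw [hDdecomp, ← Matrix.mulVec_mulVec, ← Matrix.mulVec_mulVec, ← hu, hdiag]
  have h1 : enorm₂ (D *ᵥ w) = enorm₂ (fun i => lam i * u i) := by
    rw [hDw, enorm_orth hU1]
  have h2 : enorm₂ w = enorm₂ u := by
    conv_lhs => rw [hw]
    exact enorm_orth hU1 u
  rw [h1, h2]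
  unfold enorm₂
  have hsum : ∑ i, (lam i * u i) ^ 2 ≤ (sprad D) ^ 2 * ∑ i, u i ^ 2 := by
    rw [Finset.mul_sum]
    apply Finset.sum_le_sum
    intro i _
    rw [mul_pow]
    apply mul_le_mul_of_nonneg_right _ (sq_nonneg _)
    calc lam i ^ 2 = |lam i| ^ 2 := (sq_abs _).symm
      _ ≤ (sprad D) ^ 2 := by
          apply pow_le_pow_left₀ (abs_nonneg _) (hstep i)
  calc Real.sqrt (∑ i, (lam i * u i) ^ 2)
      ≤ Real.sqrt ((sprad D) ^ 2 * ∑ i, u i ^ 2) := Real.sqrt_le_sqrt hsum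
    _ = sprad D * Real.sqrt (∑ i, u i ^ 2) := by
        rw [Real.sqrt_mul (sq_nonneg _), Real.sqrt_sq hs0]

/-- The EDMD residual is bounded by the spectral radius of the projection difference. -/
theorem residual_le_sprad {N Nd : ℕ}
    (ΦX ΦY : Matrix (Fin N) (Fin Nd) ℝ)
    (hX : IsUnit (ΦXᵀ * ΦX)) (hY : IsUnit (ΦYᵀ * ΦY)) :
    ∀ v : Fin Nd → ℝ,
      enorm₂ (ΦY.mulVec v - ΦX.mulVec ((pinv ΦX * ΦY).mulVec v)) ≤
        sprad (ΦY * pinv ΦY - ΦX * pinv ΦX) * enorm₂ (ΦY.mulVec v) := by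
  intro v
  set D := ΦY * pinv ΦY - ΦX * pinv ΦX with hDdef
  -- D is symmetric
  have hsymm : ∀ (A : Matrix (Fin N) (Fin Nd) ℝ), (A * pinv A)ᵀ = A * pinv A := by
    intro A
    simp only [pinv, Matrix.transpose_mul, Matrix.transpose_nonsing_inv,
      Matrix.transpose_transpose, Matrix.mul_assoc]
  have hD : D.IsHermitian := by
    rw [Matrix.IsHermitian, Matrix.conjTranspose_eq_transpose_of_trivial, hDdef,
      Matrix.transpose_sub, hsymm, hsymm]
  -- the residual equals D applied to ΦY v
  have hYid : ΦY * pinv ΦY * ΦY = ΦY := by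
    rw [pinv, Matrix.mul_assoc ΦY ((ΦYᵀ * ΦY)⁻¹ * ΦYᵀ) ΦY,
      Matrix.mul_assoc ((ΦYᵀ * ΦY)⁻¹) ΦYᵀ ΦY,
      Matrix.nonsing_inv_mul _ ((Matrix.isUnit_iff_isUnit_det _).mp hY), Matrix.mul_one]
  have hres : D *ᵥ (ΦY *ᵥ v) = ΦY.mulVec v - ΦX.mulVec ((pinv ΦX * ΦY).mulVec v) := by
    rw [Matrix.mulVec_mulVec, hDdef, Matrix.sub_mul, Matrix.sub_mulVec, hYid]
    congr 1
    rw [Matrix.mul_assoc, ← Matrix.mulVec_mulVec]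
  rw [← hres]
  exact herm_bound hD _
end
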